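/- arXiv:2503.03577 — 2 statements merged into one kernel-verified Lean document; each statement's English description precedes it below -/
import Mathlib

section
/- Let k ≥ 2 and let Γ be a saturated precolored convex Θ^k-drawing of a graph G on n ≥ 2k − 1 vertices with coloring φ. Then for each color c ∈ {1,…,k}, the number of inner edges of color c is at least (n − 2k + 1)/(2k − 3), i.e., (2k−3)·|{e ∈ E(G) : φ(e) = c and e is an inner edge}| ≥ n − 2k + 1. -/
/-- Points of the plane. -/
abbrev Pt : Type := ℝ × ℝ

/-- Two straight-line segments cross if some point lies in the interior
(open segment) of both. -/
def SegCross (a b c d : Pt) : Prop :=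
  ∃ x : Pt, x ∈ openSegment ℝ a b ∧ x ∈ openSegment ℝ c d

/-- Two edges (unordered pairs of vertices) cross in the drawing `p`. -/
def EdgeCross {V : Type} (p : V → Pt) (e f : Sym2 V) : Prop :=
  ∃ u v x y : V, e = s(u, v) ∧ f = s(x, y) ∧ SegCross (p u) (p v) (p x) (p y)

/-- The drawing `p` is injective and no three vertex points are collinear. -/
def GenPos {V : Type} (p : V → Pt) : Prop :=
  Function.Injective p ∧
    ∀ u v w : V, u ≠ v → u ≠ w → v ≠ w → ¬ Collinear ℝ ({p u, p v, p w} : Set Pt)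

/-- The vertex points are in convex position: every vertex point is an extreme
point of the convex hull of all vertex points. -/
def ConvexPos {V : Type} (p : V → Pt) : Prop :=
  ∀ v : V, p v ∈ Set.extremePoints ℝ (convexHull ℝ (Set.range p))

/-- A `k`-coloring of the edges of `G` is crossing-free if no two distinct
edges of the same color cross. -/
def CrossingFree {V : Type} {k : ℕ} (G : SimpleGraph V) (p : V → Pt)
    (φ : Sym2 V → Fin k) : Prop :=
  ∀ e ∈ G.edgeSet, ∀ f ∈ G.edgeSet, e ≠ f → φ e = φ f → ¬ EdgeCross p e f

open scoped Classical

/-- A precolored drawing `(G, p, φ)` is saturated: for every pair of distinct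
non-adjacent vertices and every color `c`, assigning color `c` to the new edge
`uv` yields a coloring that is not crossing-free. -/
def PrecoloredSaturated {V : Type} {k : ℕ} (G : SimpleGraph V) (p : V → Pt)
    (φ : Sym2 V → Fin k) : Prop :=
  ∀ u v : V, u ≠ v → ¬ G.Adj u v → ∀ c : Fin k,
    ¬ CrossingFree (G ⊔ SimpleGraph.fromEdgeSet {s(u, v)}) p
      (fun e => if e = s(u, v) then c else φ e)

/-- A (non-precolored) drawing of `G` is saturated for thickness `k`: for every
pair of distinct non-adjacent vertices `u, v`, the drawing of `G + uv` admits
no crossing-free `k`-coloring. -/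
def Saturated {V : Type} (k : ℕ) (G : SimpleGraph V) (p : V → Pt) : Prop :=
  ∀ u v : V, u ≠ v → ¬ G.Adj u v →
    ∀ φ : Sym2 V → Fin k,
      ¬ CrossingFree (G ⊔ SimpleGraph.fromEdgeSet {s(u, v)}) p φ

/-- Twice the signed area of the triangle `a b c`. -/
def det2 (a b c : Pt) : ℝ :=
  (b.1 - a.1) * (c.2 - a.2) - (b.2 - a.2) * (c.1 - a.1)

/-- An edge is an outer edge if its endpoints are consecutive on the boundary
of the convex hull of the vertex points, i.e. all other vertex points lie
strictly on one side of the line through its endpoints. -/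
def IsOuterEdge {V : Type} (p : V → Pt) (e : Sym2 V) : Prop :=
  ∃ u v : V, e = s(u, v) ∧
    ((∀ w : V, w ≠ u → w ≠ v → 0 < det2 (p u) (p v) (p w)) ∨
     (∀ w : V, w ≠ u → w ≠ v → det2 (p u) (p v) (p w) < 0))

/-!
Inside a convex polygon with vertex set `W`, a diagonal `ab` colored `c` splits `W` into the two
sub-polygons on either side of it, whose sizes add up to `#W + 2`. Saturation, in the form "every
non-edge inside `W` is crossed by an edge of color `c` inside `W`", passes to both halves: an
edge of color `c` does not cross `ab`, so it lies on one side, and an edge on one side cannot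
cross a chord on the other. When `W` has no diagonal colored `c`, saturation makes `W` a clique,
whose `#W (#W - 3) / 2` diagonals fall into `k - 1` crossing-free color classes; such a class has
at most `#W - 3` members, which forces `#W ≤ 2k - 2`. By induction, `#W ≤ (2k - 3) d + 2k - 1`,
where `d` counts the diagonals of `W` colored `c`; for `W` the whole vertex set these are inner
edges.
-/

open scoped Finset

lemma det2_swap (A B C : Pt) : det2 B A C = -det2 A B C := by unfold det2; ring

lemma det2_swap_right (A B C : Pt) : det2 A C B = -det2 A B C := by unfold det2; ring

lemma det2_self_left (A B : Pt) : det2 A B A = 0 := by unfold det2; ring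

lemma det2_self_right (A B : Pt) : det2 A B B = 0 := by unfold det2; ring

lemma det2_combo (A B C D : Pt) (t : ℝ) :
    det2 A B ((1 - t) • C + t • D) = (1 - t) * det2 A B C + t * det2 A B D := by
  simp only [det2, Prod.fst_add, Prod.snd_add, Prod.smul_fst, Prod.smul_snd, smul_eq_mul]; ring

lemma collinear_of_det2_eq_zero {A B C : Pt} (h : det2 A B C = 0) :
    Collinear ℝ ({A, B, C} : Set Pt) := by
  rcases eq_or_ne A B with rfl | hAB
  · simpa using collinear_pair ℝ A C
  have hN : (B.1 - A.1) ^ 2 + (B.2 - A.2) ^ 2 ≠ 0 := by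
    intro h0
    exact hAB (Prod.ext (by nlinarith [sq_nonneg (B.1 - A.1), sq_nonneg (B.2 - A.2)])
      (by nlinarith [sq_nonneg (B.1 - A.1), sq_nonneg (B.2 - A.2)]))
  rw [collinear_iff_of_mem (Set.mem_insert A _)]
  refine ⟨B - A, ?_⟩
  rintro P (rfl | rfl | rfl)
  · exact ⟨0, by simp⟩
  · exact ⟨1, by simp⟩
  · -- the coefficient of the orthogonal projection of `P - A` onto `B - A`
    refine ⟨((P.1 - A.1) * (B.1 - A.1) + (P.2 - A.2) * (B.2 - A.2)) /
      ((B.1 - A.1) ^ 2 + (B.2 - A.2) ^ 2), Prod.ext ?_ ?_⟩ <;>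
    simp only [vadd_eq_add, Prod.fst_add, Prod.snd_add, Prod.smul_fst, Prod.smul_snd,
      Prod.fst_sub, Prod.snd_sub, smul_eq_mul] <;>
    unfold det2 at h <;> field_simp
    · linear_combination (A.2 - B.2) * h
    · linear_combination (B.1 - A.1) * h

lemma SegCross.symm {A B C D : Pt} (h : SegCross A B C D) : SegCross C D A B :=
  let ⟨x, h₁, h₂⟩ := h; ⟨x, h₂, h₁⟩

lemma SegCross.swap_right {A B C D : Pt} (h : SegCross A B C D) : SegCross A B D C :=
  let ⟨x, h₁, h₂⟩ := h; ⟨x, h₁, openSegment_symm ℝ C D ▸ h₂⟩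

lemma SegCross.det2_neg_or_neg {A B Z W C D : Pt} (h : SegCross A B Z W)
    (hZ : det2 C D Z ≤ 0) (hW : det2 C D W < 0) : det2 C D A < 0 ∨ det2 C D B < 0 := by
  obtain ⟨x, hAB, hZW⟩ := h
  rw [openSegment_eq_image] at hAB hZW
  obtain ⟨s, ⟨hs₀, hs₁⟩, rfl⟩ := hAB
  obtain ⟨t, ⟨ht₀, ht₁⟩, hx⟩ := hZW
  have hval := congrArg (det2 C D) hx
  rw [det2_combo, det2_combo] at hval
  by_contra! hAB
  nlinarith [mul_nonneg (sub_nonneg.2 hs₁.le) hAB.1, mul_nonneg hs₀.le hAB.2,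
    mul_nonpos_of_nonneg_of_nonpos (sub_nonneg.2 ht₁.le) hZ, mul_neg_of_pos_of_neg ht₀ hW]

lemma SegCross.det2_mul_neg {A B C D : Pt} (h : SegCross A B C D) (hC : det2 A B C ≠ 0) :
    det2 A B C * det2 A B D < 0 := by
  obtain ⟨x, hAB, hCD⟩ := h
  rw [openSegment_eq_image] at hAB hCD
  obtain ⟨s, -, rfl⟩ := hAB
  obtain ⟨t, ⟨ht₀, ht₁⟩, hx⟩ := hCD
  have hval := congrArg (det2 A B) hx
  rw [det2_combo, det2_combo, det2_self_left, det2_self_right] at hval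
  have hprod : t * (det2 A B C * det2 A B D) = -((1 - t) * det2 A B C ^ 2) := by
    linear_combination det2 A B C * hval
  have hsq : 0 < (1 - t) * det2 A B C ^ 2 := mul_pos (by linarith) (sq_pos_of_ne_zero hC)
  exact neg_of_mul_neg_right (by linarith) ht₀.le

lemma mem_Ioo_div_sub_of_mul_neg {α β : ℝ} (h : α * β < 0) : α / (α - β) ∈ Set.Ioo 0 1 := by
  rcases mul_neg_iff.1 h with ⟨hα, hβ⟩ | ⟨hα, hβ⟩
  · exact ⟨div_pos hα (by linarith), (div_lt_one (by linarith)).2 (by linarith)⟩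
  · exact ⟨div_pos_of_neg_of_neg hα (by linarith),
      (div_lt_one_of_neg (by linarith)).2 (by linarith)⟩

lemma segCross_of_det2_mul_neg {A B C D : Pt} (h₁ : det2 A B C * det2 A B D < 0)
    (h₂ : det2 C D A * det2 C D B < 0) : SegCross A B C D := by
  have hΔ₁ : det2 A B C - det2 A B D ≠ 0 := by
    intro h0; rw [sub_eq_zero.1 h0] at h₁; nlinarith [mul_self_nonneg (det2 A B D)]
  have hΔ₂ : det2 C D A - det2 C D B ≠ 0 := by
    intro h0; rw [sub_eq_zero.1 h0] at h₂; nlinarith [mul_self_nonneg (det2 C D B)]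
  refine ⟨(1 - det2 C D A / (det2 C D A - det2 C D B)) • A +
    (det2 C D A / (det2 C D A - det2 C D B)) • B, ?_, ?_⟩
  · rw [openSegment_eq_image]; exact ⟨_, mem_Ioo_div_sub_of_mul_neg h₂, rfl⟩
  · rw [openSegment_eq_image]
    refine ⟨_, mem_Ioo_div_sub_of_mul_neg h₁, ?_⟩
    -- both parametrisations give the intersection point of the lines `AB` and `CD`
    refine Prod.ext ?_ ?_ <;>
    simp only [Prod.fst_add, Prod.snd_add, Prod.smul_fst, Prod.smul_snd, smul_eq_mul] <;>
    field_simp <;> unfold det2 <;> ring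

lemma notMem_extremePoints_of_det2 {K : Set Pt} (hK : Convex ℝ K) {A B C D : Pt}
    (hB : B ∈ K) (hC : C ∈ K) (hD : D ∈ K) (h₁ : 0 < det2 A B C) (h₂ : det2 A B D < 0)
    (h₃ : 0 < det2 C D A) (h₄ : 0 < det2 C D B) : A ∉ K.extremePoints ℝ := by
  -- the line `AB` meets the segment `CD` in a point `q`, and `A` lies strictly between `B` and `q`
  have hμ := mem_Ioo_div_sub_of_mul_neg (mul_neg_of_pos_of_neg h₁ h₂)
  set μ := det2 A B C / (det2 A B C - det2 A B D)
  set q := (1 - μ) • C + μ • D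
  have hq : q ∈ K := hK hC hD (by linarith [hμ.2]) hμ.1.le (by ring)
  have h₄' : det2 C D B = det2 A B C - det2 A B D + det2 C D A := by unfold det2; ring
  set θ := (det2 A B C - det2 A B D) / det2 C D B
  have hθ : θ ∈ Set.Ioo 0 1 :=
    ⟨div_pos (by linarith) h₄, (div_lt_one h₄).2 (by linarith)⟩
  have hne₁ : det2 A B C - det2 A B D ≠ 0 := by linarith
  have hne₂ : det2 C D B ≠ 0 := h₄.ne'
  have hA : A ∈ openSegment ℝ B q := by
    rw [openSegment_eq_image]
    refine ⟨θ, hθ, Prod.ext ?_ ?_⟩ <;>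
    simp only [q, θ, μ, Prod.fst_add, Prod.snd_add, Prod.smul_fst, Prod.smul_snd,
      smul_eq_mul] <;>
    field_simp <;> unfold det2 <;> ring
  intro hext
  have hAB : A ≠ B := by rintro rfl; simp [det2] at h₁
  exact hAB ((mem_extremePoints.1 hext).2 B hB q hq hA).1.symm

variable {V : Type} {p : V → Pt} {a b c d : V}

lemma det2_ne_zero (hgen : GenPos p) (hab : a ≠ b) (hac : a ≠ c) (hbc : b ≠ c) :
    det2 (p a) (p b) (p c) ≠ 0 :=
  fun h ↦ hgen.2 a b c hab hac hbc (collinear_of_det2_eq_zero h)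

def Separates (p : V → Pt) (a b c d : V) : Prop :=
  det2 (p a) (p b) (p c) * det2 (p a) (p b) (p d) < 0

lemma separates_swap_left : Separates p b a c d ↔ Separates p a b c d := by
  simp only [Separates, det2_swap (p a), neg_mul_neg]

lemma separates_swap_right : Separates p a b d c ↔ Separates p a b c d := by
  simp only [Separates, mul_comm]

lemma Separates.symm (hgen : GenPos p) (hconv : ConvexPos p) (h : Separates p a b c d) :
    Separates p c d a b := by
  have hc : det2 (p a) (p b) (p c) ≠ 0 := left_ne_zero_of_mul h.ne
  have hd : det2 (p a) (p b) (p d) ≠ 0 := right_ne_zero_of_mul h.ne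
  have hcd : c ≠ d := by rintro rfl; exact (mul_self_nonneg _).not_gt h
  have hca : c ≠ a := by rintro rfl; exact hc (det2_self_left _ _)
  have hcb : c ≠ b := by rintro rfl; exact hc (det2_self_right _ _)
  have hda : d ≠ a := by rintro rfl; exact hd (det2_self_left _ _)
  have hdb : d ≠ b := by rintro rfl; exact hd (det2_self_right _ _)
  have ha := det2_ne_zero hgen hcd hca hda
  have hb := det2_ne_zero hgen hcd hcb hdb
  unfold Separates at h ⊢
  by_contra! hsame
  have hpos := lt_of_le_of_ne hsame (mul_ne_zero ha hb).symm
  have hK := convex_convexHull ℝ (Set.range p)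
  have hmem (v : V) : p v ∈ convexHull ℝ (Set.range p) := subset_convexHull ℝ _ ⟨v, rfl⟩
  rcases mul_neg_iff.1 h with ⟨h₁, h₂⟩ | ⟨h₁, h₂⟩ <;>
    rcases mul_pos_iff.1 hpos with ⟨h₃, h₄⟩ | ⟨h₃, h₄⟩
  · exact notMem_extremePoints_of_det2 hK (hmem b) (hmem c) (hmem d) h₁ h₂ h₃ h₄ (hconv a)
  · refine notMem_extremePoints_of_det2 hK (hmem a) (hmem d) (hmem c) ?_ ?_ ?_ ?_ (hconv b) <;>
      simp only [det2_swap (p a), det2_swap (p c)] <;> linarith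
  · refine notMem_extremePoints_of_det2 hK (hmem a) (hmem c) (hmem d) ?_ ?_ h₄ h₃ (hconv b) <;>
      simp only [det2_swap (p a)] <;> linarith
  · refine notMem_extremePoints_of_det2 hK (hmem b) (hmem d) (hmem c) h₂ h₁ ?_ ?_ (hconv a) <;>
      simp only [det2_swap (p c)] <;> linarith

lemma ne_and_ne_or_ne_and_ne_of_sym2_ne (hcd : c ≠ d) (hne : s(c, d) ≠ s(a, b)) :
    (c ≠ a ∧ c ≠ b) ∨ (d ≠ a ∧ d ≠ b) := by
  by_contra! h
  have hc : c = a ∨ c = b := by tauto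
  have hd : d = a ∨ d = b := by tauto
  rcases hc with rfl | rfl <;> rcases hd with rfl | rfl
  · exact hcd rfl
  · exact hne rfl
  · exact hne Sym2.eq_swap
  · exact hcd rfl

lemma Separates.of_sym2_eq {u v x y : V} (h₁ : s(a, b) = s(u, v)) (h₂ : s(c, d) = s(x, y))
    (h : Separates p u v x y) : Separates p a b c d := by
  rcases Sym2.eq_iff.1 h₁ with ⟨rfl, rfl⟩ | ⟨rfl, rfl⟩ <;>
    rcases Sym2.eq_iff.1 h₂ with ⟨rfl, rfl⟩ | ⟨rfl, rfl⟩ <;>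
    simpa only [separates_swap_left, separates_swap_right] using h

lemma Separates.segCross (hgen : GenPos p) (hconv : ConvexPos p) (h : Separates p a b c d) :
    SegCross (p a) (p b) (p c) (p d) :=
  segCross_of_det2_mul_neg h (h.symm hgen hconv)

lemma Separates.edgeCross (hgen : GenPos p) (hconv : ConvexPos p) (h : Separates p a b c d) :
    EdgeCross p s(a, b) s(c, d) :=
  ⟨a, b, c, d, rfl, rfl, h.segCross hgen hconv⟩

lemma EdgeCross.symm {e f : Sym2 V} (h : EdgeCross p e f) : EdgeCross p f e :=
  let ⟨u, v, x, y, hu, hx, h⟩ := h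
  ⟨x, y, u, v, hx, hu, h.symm⟩

lemma EdgeCross.separates (hgen : GenPos p) (hab : a ≠ b) (hcd : c ≠ d)
    (hne : s(c, d) ≠ s(a, b)) (h : EdgeCross p s(a, b) s(c, d)) : Separates p a b c d := by
  obtain ⟨u, v, x, y, h₁, h₂, hseg⟩ := h
  refine Separates.of_sym2_eq h₁ h₂ ?_
  have huv : u ≠ v := fun h ↦ hab (Sym2.mk_isDiag_iff.1 (h₁ ▸ Sym2.mk_isDiag_iff.2 h))
  have hxy : x ≠ y := fun h ↦ hcd (Sym2.mk_isDiag_iff.1 (h₂ ▸ Sym2.mk_isDiag_iff.2 h))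
  rw [h₁, h₂] at hne
  rcases ne_and_ne_or_ne_and_ne_of_sym2_ne hxy hne with ⟨hxu, hxv⟩ | ⟨hyu, hyv⟩
  · exact hseg.det2_mul_neg (det2_ne_zero hgen huv hxu.symm hxv.symm)
  · exact separates_swap_right.1
      (hseg.swap_right.det2_mul_neg (det2_ne_zero hgen huv hyu.symm hyv.symm))

noncomputable def leftSide (p : V → Pt) (W : Finset V) (a b : V) : Finset V :=
  {w ∈ W | 0 ≤ det2 (p a) (p b) (p w)}

section leftSide

variable {W : Finset V} {u v w : V}

lemma mem_leftSide : w ∈ leftSide p W a b ↔ w ∈ W ∧ 0 ≤ det2 (p a) (p b) (p w) :=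
  Finset.mem_filter

lemma mem_leftSide_swap : w ∈ leftSide p W b a ↔ w ∈ W ∧ det2 (p a) (p b) (p w) ≤ 0 := by
  rw [mem_leftSide, det2_swap, neg_nonneg]

lemma leftSide_subset : leftSide p W a b ⊆ W := Finset.filter_subset _ _

lemma left_mem_leftSide (ha : a ∈ W) : a ∈ leftSide p W a b :=
  mem_leftSide.2 ⟨ha, (det2_self_left _ _).ge⟩

lemma right_mem_leftSide (hb : b ∈ W) : b ∈ leftSide p W a b :=
  mem_leftSide.2 ⟨hb, (det2_self_right _ _).ge⟩

lemma det2_pos_of_mem_leftSide (hgen : GenPos p) (hab : a ≠ b) (hw : w ∈ leftSide p W a b)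
    (hwa : w ≠ a) (hwb : w ≠ b) : 0 < det2 (p a) (p b) (p w) :=
  (mem_leftSide.1 hw).2.lt_of_ne (det2_ne_zero hgen hab hwa.symm hwb.symm).symm

lemma det2_pos_or_det2_pos_of_mem_leftSide (hgen : GenPos p) (hab : a ≠ b) (hcd : c ≠ d)
    (hne : s(c, d) ≠ s(a, b)) (hc : c ∈ leftSide p W a b) (hd : d ∈ leftSide p W a b) :
    0 < det2 (p a) (p b) (p c) ∨ 0 < det2 (p a) (p b) (p d) :=
  (ne_and_ne_or_ne_and_ne_of_sym2_ne hcd hne).imp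
    (fun h ↦ det2_pos_of_mem_leftSide hgen hab hc h.1 h.2)
    (fun h ↦ det2_pos_of_mem_leftSide hgen hab hd h.1 h.2)

lemma eq_or_eq_of_mem_leftSide_of_mem_leftSide (hgen : GenPos p) (hab : a ≠ b)
    (h₁ : w ∈ leftSide p W a b) (h₂ : w ∈ leftSide p W b a) : w = a ∨ w = b := by
  by_contra! h
  have := det2_pos_of_mem_leftSide hgen hab h₁ h.1 h.2
  linarith [(mem_leftSide_swap.1 h₂).2]

lemma card_leftSide_add_card_leftSide (hgen : GenPos p) (ha : a ∈ W) (hb : b ∈ W)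
    (hab : a ≠ b) : #(leftSide p W a b) + #(leftSide p W b a) = #W + 2 := by
  have hunion : leftSide p W a b ∪ leftSide p W b a = W := by
    ext w
    rw [Finset.mem_union]
    refine ⟨fun h ↦ h.elim (leftSide_subset ·) (leftSide_subset ·), fun hw ↦ ?_⟩
    exact (le_total 0 (det2 (p a) (p b) (p w))).imp (mem_leftSide.2 ⟨hw, ·⟩)
      (mem_leftSide_swap.2 ⟨hw, ·⟩)
  have hinter : leftSide p W a b ∩ leftSide p W b a = {a, b} := by
    ext w
    simp only [Finset.mem_inter, Finset.mem_insert, Finset.mem_singleton]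
    refine ⟨fun h ↦ eq_or_eq_of_mem_leftSide_of_mem_leftSide hgen hab h.1 h.2, ?_⟩
    rintro (rfl | rfl)
    · exact ⟨left_mem_leftSide ha, right_mem_leftSide ha⟩
    · exact ⟨right_mem_leftSide hb, left_mem_leftSide hb⟩
  rw [← Finset.card_union_add_card_inter, hunion, hinter, Finset.card_pair hab]

lemma not_separates_of_mem_leftSide (hu : u ∈ leftSide p W a b) (hv : v ∈ leftSide p W a b) :
    ¬Separates p a b u v :=
  (mul_nonneg (mem_leftSide.1 hu).2 (mem_leftSide.1 hv).2).not_gt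

lemma mem_leftSide_or_mem_leftSide_of_not_separates (hc : c ∈ W) (hd : d ∈ W)
    (h : ¬Separates p a b c d) :
    (c ∈ leftSide p W a b ∧ d ∈ leftSide p W a b) ∨
      (c ∈ leftSide p W b a ∧ d ∈ leftSide p W b a) := by
  rcases mul_nonneg_iff.1 (not_lt.1 h) with h | h
  · exact .inl ⟨mem_leftSide.2 ⟨hc, h.1⟩, mem_leftSide.2 ⟨hd, h.2⟩⟩
  · exact .inr ⟨mem_leftSide_swap.2 ⟨hc, h.1⟩, mem_leftSide_swap.2 ⟨hd, h.2⟩⟩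

lemma not_separates_of_mem_leftSide_of_mem_leftSide (hgen : GenPos p) (hconv : ConvexPos p)
    {x y : V} (hu : u ∈ leftSide p W a b) (hv : v ∈ leftSide p W a b)
    (hx : 0 < det2 (p b) (p a) (p x)) (hy : y ∈ leftSide p W b a) : ¬Separates p u v x y := by
  intro h
  rw [det2_swap, neg_pos] at hx
  rcases (h.segCross hgen hconv).swap_right.det2_neg_or_neg (mem_leftSide_swap.1 hy).2 hx with
    h | h
  · exact h.not_ge (mem_leftSide.1 hu).2
  · exact h.not_ge (mem_leftSide.1 hv).2

end leftSide

/-- `ab` is a diagonal (not a side) of the convex polygon with vertex set `W`. -/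
def IsDiagonal (p : V → Pt) (W : Finset V) (a b : V) : Prop :=
  a ∈ W ∧ b ∈ W ∧ (∃ w ∈ W, 0 < det2 (p a) (p b) (p w)) ∧ ∃ w ∈ W, det2 (p a) (p b) (p w) < 0

section IsDiagonal

variable {W : Finset V}

lemma IsDiagonal.symm (h : IsDiagonal p W a b) : IsDiagonal p W b a := by
  obtain ⟨ha, hb, ⟨w, hw, hpos⟩, w', hw', hneg⟩ := h
  exact ⟨hb, ha, ⟨w', hw', by rw [det2_swap]; linarith⟩, w, hw, by rw [det2_swap]; linarith⟩

lemma IsDiagonal.ne (h : IsDiagonal p W a b) : a ≠ b := by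
  rintro rfl
  obtain ⟨-, -, ⟨w, -, hw⟩, -⟩ := h
  simp [det2] at hw

lemma IsDiagonal.mono {W' : Finset V} (h : IsDiagonal p W a b) (hW : W ⊆ W') :
    IsDiagonal p W' a b :=
  let ⟨ha, hb, ⟨w, hw, hpos⟩, w', hw', hneg⟩ := h
  ⟨hW ha, hW hb, ⟨w, hW hw, hpos⟩, w', hW hw', hneg⟩

lemma Separates.isDiagonal {u v : V} (h : Separates p a b u v) (ha : a ∈ W) (hb : b ∈ W)
    (hu : u ∈ W) (hv : v ∈ W) : IsDiagonal p W a b := by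
  rcases mul_neg_iff.1 h with ⟨h₁, h₂⟩ | ⟨h₁, h₂⟩
  · exact ⟨ha, hb, ⟨u, hu, h₁⟩, v, hv, h₂⟩
  · exact ⟨ha, hb, ⟨v, hv, h₂⟩, u, hu, h₁⟩

lemma not_isDiagonal_leftSide : ¬IsDiagonal p (leftSide p W a b) a b :=
  fun ⟨_, _, _, _, hw, hneg⟩ ↦ hneg.not_ge (mem_leftSide.1 hw).2

lemma IsDiagonal.leftSide_ssubset (h : IsDiagonal p W a b) : leftSide p W a b ⊂ W :=
  let ⟨_, _, _, w, hw, hneg⟩ := h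
  Finset.filter_ssubset.2 ⟨w, hw, hneg.not_ge⟩

lemma IsDiagonal.three_le_card_leftSide (h : IsDiagonal p W a b) : 3 ≤ #(leftSide p W a b) := by
  obtain ⟨ha, hb, ⟨w, hw, hpos⟩, -⟩ := h
  have hwa : a ≠ w := by rintro rfl; simp [det2_self_left] at hpos
  have hwb : b ≠ w := by rintro rfl; simp [det2_self_right] at hpos
  have hab : a ≠ b := by rintro rfl; simp [det2] at hpos
  rw [← Finset.card_eq_three.2 ⟨a, b, w, hab, hwa, hwb, rfl⟩]
  refine Finset.card_le_card (Finset.insert_subset (left_mem_leftSide ha)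
    (Finset.insert_subset (right_mem_leftSide hb) (Finset.singleton_subset_iff.2 ?_)))
  exact mem_leftSide.2 ⟨hw, hpos.le⟩

lemma IsDiagonal.exists_det2_neg_mem_leftSide (hgen : GenPos p) (hconv : ConvexPos p)
    (hab : IsDiagonal p W a b) (hcd : c ≠ d) (hne : s(c, d) ≠ s(a, b))
    (hc : c ∈ leftSide p W a b) (hd : d ∈ leftSide p W a b) {w : V} (hw : w ∈ W)
    (hneg : det2 (p c) (p d) (p w) < 0) :
    ∃ w ∈ leftSide p W a b, det2 (p c) (p d) (p w) < 0 := by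
  by_cases hw' : w ∈ leftSide p W a b
  · exact ⟨w, hw', hneg⟩
  have hwab : det2 (p a) (p b) (p w) < 0 := by simpa [mem_leftSide, hw] using hw'
  -- `ab` crosses the segment from `w` to an endpoint of `cd` strictly left of `ab`
  have key (z : V) (hz : det2 (p c) (p d) (p z) = 0) (hpos : 0 < det2 (p a) (p b) (p z)) :
      det2 (p c) (p d) (p a) < 0 ∨ det2 (p c) (p d) (p b) < 0 :=
    (Separates.segCross hgen hconv (mul_neg_of_pos_of_neg hpos hwab)).det2_neg_or_neg hz.le hneg
  rcases (det2_pos_or_det2_pos_of_mem_leftSide hgen hab.ne hcd hne hc hd).elim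
      (key c (det2_self_left _ _)) (key d (det2_self_right _ _)) with h | h
  · exact ⟨a, left_mem_leftSide hab.1, h⟩
  · exact ⟨b, right_mem_leftSide hab.2.1, h⟩

lemma IsDiagonal.isDiagonal_leftSide (hgen : GenPos p) (hconv : ConvexPos p)
    (hab : IsDiagonal p W a b) (hcd : IsDiagonal p W c d) (hne : s(c, d) ≠ s(a, b))
    (hc : c ∈ leftSide p W a b) (hd : d ∈ leftSide p W a b) :
    IsDiagonal p (leftSide p W a b) c d := by
  have hcd' := hcd.ne
  obtain ⟨-, -, ⟨w, hw, hpos⟩, w', hw', hneg⟩ := hcd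
  obtain ⟨x, hx, hx'⟩ := hab.exists_det2_neg_mem_leftSide hgen hconv hcd' hne hc hd hw' hneg
  obtain ⟨y, hy, hy'⟩ := hab.exists_det2_neg_mem_leftSide hgen hconv hcd'.symm
    (by rwa [Sym2.eq_swap]) hd hc hw (by rw [det2_swap]; linarith)
  exact ⟨hc, hd, ⟨y, hy, by rw [det2_swap] at hy'; linarith⟩, x, hx, hx'⟩

end IsDiagonal

def diagonals (p : V → Pt) (W : Finset V) : Set (Sym2 V) :=
  Sym2.fromRel (r := IsDiagonal p W) ⟨fun _ _ ↦ IsDiagonal.symm⟩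

section diagonals

variable {W : Finset V}

@[simp]
lemma mk_mem_diagonals : s(a, b) ∈ diagonals p W ↔ IsDiagonal p W a b := Sym2.fromRel_prop

lemma diagonals_mono {W' : Finset V} (hW : W ⊆ W') : diagonals p W ⊆ diagonals p W' := by
  intro e
  induction e using Sym2.ind with
  | h a b => simpa using (IsDiagonal.mono · hW)

lemma disjoint_diagonals_leftSide (hgen : GenPos p) (hab : a ≠ b) :
    Disjoint (diagonals p (leftSide p W a b)) (diagonals p (leftSide p W b a)) := by
  rw [Set.disjoint_left]
  intro e
  induction e using Sym2.ind with
  | h x y =>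
    simp only [mk_mem_diagonals]
    intro h₁ h₂
    have hx := eq_or_eq_of_mem_leftSide_of_mem_leftSide hgen hab h₁.1 h₂.1
    have hy := eq_or_eq_of_mem_leftSide_of_mem_leftSide hgen hab h₁.2.1 h₂.2.1
    rcases hx with rfl | rfl <;> rcases hy with rfl | rfl
    · exact h₁.ne rfl
    · exact not_isDiagonal_leftSide h₁
    · exact not_isDiagonal_leftSide h₁.symm
    · exact h₁.ne rfl

lemma IsDiagonal.mem_diagonals_leftSide_or (hgen : GenPos p) (hconv : ConvexPos p)
    (hab : IsDiagonal p W a b) {e : Sym2 V} (he : e ∈ diagonals p W) (hne : e ≠ s(a, b))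
    (hcross : ¬EdgeCross p s(a, b) e) :
    e ∈ diagonals p (leftSide p W a b) ∨ e ∈ diagonals p (leftSide p W b a) := by
  induction e using Sym2.ind with
  | h c d =>
    simp only [mk_mem_diagonals] at he ⊢
    have hsep : ¬Separates p a b c d := fun h ↦ hcross (h.edgeCross hgen hconv)
    rcases mem_leftSide_or_mem_leftSide_of_not_separates he.1 he.2.1 hsep with ⟨hc, hd⟩ | ⟨hc, hd⟩
    · exact .inl (hab.isDiagonal_leftSide hgen hconv he hne hc hd)
    · exact .inr (hab.symm.isDiagonal_leftSide hgen hconv he (by rwa [Sym2.eq_swap (a := b)])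
        hc hd)

lemma not_isOuterEdge_of_mem_diagonals {e : Sym2 V} (he : e ∈ diagonals p W) :
    ¬IsOuterEdge p e := by
  rintro ⟨u, v, rfl, hside⟩
  obtain ⟨-, -, ⟨w, -, hpos⟩, w', -, hneg⟩ := mk_mem_diagonals.1 he
  have hw : w ≠ u ∧ w ≠ v := by
    constructor <;> rintro rfl <;> simp [det2_self_left, det2_self_right] at hpos
  have hw' : w' ≠ u ∧ w' ≠ v := by
    constructor <;> rintro rfl <;> simp [det2_self_left, det2_self_right] at hneg
  rcases hside with h | h
  · exact (h w' hw'.1 hw'.2).not_gt hneg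
  · exact (h w hw.1 hw.2).not_gt hpos

theorem card_add_three_le_of_pairwise_not_edgeCross (hgen : GenPos p) (hconv : ConvexPos p)
    {T : Finset (Sym2 V)} (hT : ↑T ⊆ diagonals p W)
    (hnc : (T : Set (Sym2 V)).Pairwise fun e f ↦ ¬EdgeCross p e f) (hW : 3 ≤ #W) :
    #T + 3 ≤ #W := by
  induction W using Finset.strongInduction generalizing T with
  | H W ih =>
  rcases T.eq_empty_or_nonempty with rfl | hTne
  · simpa using hW
  obtain ⟨a, b, ht⟩ := Sym2.exists.1 hTne
  have hab : IsDiagonal p W a b := mk_mem_diagonals.1 (hT ht)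
  have hside (x y : V) (hxy : IsDiagonal p W x y) :
      #{e ∈ T | e ∈ diagonals p (leftSide p W x y)} + 3 ≤ #(leftSide p W x y) :=
    ih _ hxy.leftSide_ssubset (fun e he ↦ (Finset.mem_filter.1 he).2)
      (hnc.mono fun e he ↦ (Finset.mem_filter.1 he).1)
      hxy.three_le_card_leftSide
  have hcover : T ⊆ insert s(a, b) ({e ∈ T | e ∈ diagonals p (leftSide p W a b)} ∪
      {e ∈ T | e ∈ diagonals p (leftSide p W b a)}) := by
    intro e he
    rcases eq_or_ne e s(a, b) with rfl | hne
    · exact Finset.mem_insert_self _ _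
    refine Finset.mem_insert_of_mem ?_
    simp only [Finset.mem_union, Finset.mem_filter]
    exact (hab.mem_diagonals_leftSide_or hgen hconv (hT he) hne
      (hnc ht he hne.symm)).imp (⟨he, ·⟩) (⟨he, ·⟩)
  have hcard := (Finset.card_le_card hcover).trans
    ((Finset.card_insert_le _ _).trans (Nat.succ_le_succ (Finset.card_union_le _ _)))
  have := card_leftSide_add_card_leftSide hgen hab.1 hab.2.1 hab.ne
  have := hside a b hab
  have := hside b a hab.symm
  omega

end diagonals

lemma card_mul_card_le_card_diagonals (hgen : GenPos p) (W : Finset V) :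
    #W * #W ≤ 3 * #W + 2 * #{e ∈ W.sym2 | e ∈ diagonals p W} := by
  -- ordered pairs `(a, b)` with all of `W` weakly left of `ab`; `a` determines `b`
  set L := {q ∈ W.offDiag | ∀ w ∈ W, 0 ≤ det2 (p q.1) (p q.2) (p w)}
  have hL : #L ≤ #W := by
    refine Finset.card_le_card_of_injOn Prod.fst (fun q hq ↦ ?_) (fun q hq q' hq' h ↦ ?_)
    · exact (Finset.mem_offDiag.1 (Finset.mem_filter.1 hq).1).1
    obtain ⟨a, b⟩ := q
    obtain ⟨a', b'⟩ := q'
    simp only [L, Finset.coe_filter, Set.mem_ofPred_eq, Finset.mem_offDiag] at hq hq' h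
    subst h
    by_contra hbb
    have hne := det2_ne_zero hgen hq.1.2.2 hq'.1.2.2 (fun h ↦ hbb (by rw [h]))
    have h₁ := hq.2 b' hq'.1.2.1
    have h₂ := hq'.2 b hq.1.2.1
    rw [det2_swap_right] at h₂
    exact hne (by linarith)
  have hsub : W.offDiag.image Sym2.mk.uncurry ⊆
      {e ∈ W.sym2 | e ∈ diagonals p W} ∪ L.image Sym2.mk.uncurry := by
    simp only [Finset.subset_iff, Finset.mem_image, Finset.mem_union, Finset.mem_filter,
      Prod.exists, Function.uncurry_apply_pair, Finset.mem_offDiag]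
    rintro _ ⟨a, b, ⟨ha, hb, hab⟩, rfl⟩
    by_cases hd : IsDiagonal p W a b
    · exact .inl ⟨Finset.mk_mem_sym2_iff.2 ⟨ha, hb⟩, mk_mem_diagonals.2 hd⟩
    right
    simp only [L, Finset.mem_filter, Finset.mem_offDiag]
    simp only [IsDiagonal, ha, hb, true_and, not_and_or] at hd
    push Not at hd
    rcases hd with hd | hd
    · exact ⟨b, a, ⟨⟨hb, ha, hab.symm⟩, fun w hw ↦ by rw [det2_swap]; linarith [hd w hw]⟩,
        Sym2.eq_swap⟩
    · exact ⟨a, b, ⟨⟨ha, hb, hab⟩, hd⟩, rfl⟩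
  have h₁ := Sym2.two_mul_card_image_offDiag W
  have h₂ := (Finset.card_le_card hsub).trans ((Finset.card_union_le _ _).trans
    (Nat.add_le_add_left Finset.card_image_le _))
  rw [Finset.offDiag_card] at h₁
  have h₃ : #W ≤ #W * #W := Nat.le_mul_self _
  omega

section Coloring

variable {k : ℕ} {G : SimpleGraph V} {φ : Sym2 V → Fin k} {c : Fin k} {W : Finset V}

def ColorSaturatedOn (G : SimpleGraph V) (p : V → Pt) (φ : Sym2 V → Fin k) (c : Fin k)
    (W : Finset V) : Prop :=
  ∀ u ∈ W, ∀ v ∈ W, u ≠ v → ¬G.Adj u v →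
    ∃ x ∈ W, ∃ y ∈ W, G.Adj x y ∧ φ s(x, y) = c ∧ EdgeCross p s(x, y) s(u, v)

noncomputable def colorDiagonals (G : SimpleGraph V) (p : V → Pt) (φ : Sym2 V → Fin k)
    (c : Fin k) (W : Finset V) : Finset (Sym2 V) :=
  {e ∈ W.sym2 | e ∈ diagonals p W ∧ e ∈ G.edgeSet ∧ φ e = c}

lemma colorSaturatedOn_univ [Fintype V] (hφ : CrossingFree G p φ)
    (hsat : PrecoloredSaturated G p φ) (c : Fin k) : ColorSaturatedOn G p φ c Finset.univ := by
  intro u _ v _ huv hadj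
  have huvG : s(u, v) ∉ G.edgeSet := hadj
  have hmem {e : Sym2 V} (he : e ∈ (G ⊔ SimpleGraph.fromEdgeSet {s(u, v)}).edgeSet) :
      e ∈ G.edgeSet ∨ e = s(u, v) := by
    simp only [SimpleGraph.edgeSet_sup, SimpleGraph.edgeSet_fromEdgeSet, Set.mem_union,
      Set.mem_sdiff, Set.mem_singleton_iff] at he
    exact he.imp_right And.left
  -- a crossing in `G + uv` that is monochromatic must involve the new edge `uv`
  suffices ∃ f ∈ G.edgeSet, φ f = c ∧ EdgeCross p f s(u, v) by
    obtain ⟨f, hf, hfc, hcross⟩ := this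
    induction f using Sym2.ind with
    | h x y => exact ⟨x, Finset.mem_univ _, y, Finset.mem_univ _, hf, hfc, hcross⟩
  have h := hsat u v huv hadj c
  simp only [CrossingFree, not_forall, not_not] at h
  obtain ⟨e, he, f, hf, hef, hcol, hcross⟩ := h
  have hne {g : Sym2 V} (hg : g ∈ G.edgeSet) : g ≠ s(u, v) := fun h ↦ huvG (h ▸ hg)
  rcases hmem he with he | rfl <;> rcases hmem hf with hf | rfl
  · rw [if_neg (hne he), if_neg (hne hf)] at hcol
    exact absurd hcross (hφ e he f hf hef hcol)
  · rw [if_pos rfl, if_neg (hne he)] at hcol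
    exact ⟨e, he, hcol, hcross⟩
  · rw [if_pos rfl, if_neg (hne hf)] at hcol
    exact ⟨f, hf, hcol.symm, hcross.symm⟩
  · exact absurd rfl hef

lemma ColorSaturatedOn.leftSide (hgen : GenPos p) (hconv : ConvexPos p)
    (hφ : CrossingFree G p φ) (hW : ColorSaturatedOn G p φ c W) (hab : IsDiagonal p W a b)
    (hadj : G.Adj a b) (hc : φ s(a, b) = c) : ColorSaturatedOn G p φ c (leftSide p W a b) := by
  intro u hu v hv huv hnadj
  obtain ⟨x, hx, y, hy, hxy, hxyc, hcross⟩ :=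
    hW u (leftSide_subset hu) v (leftSide_subset hv) huv hnadj
  have hsep := hcross.separates hgen hxy.ne huv
    (fun h ↦ hnadj (by rw [← G.mem_edgeSet, h]; exact hxy))
  have hne : s(x, y) ≠ s(a, b) := by
    intro h
    exact not_separates_of_mem_leftSide hu hv (hsep.of_sym2_eq h.symm rfl)
  have hsep' : ¬Separates p a b x y := fun h ↦
    hφ _ hadj _ hxy hne.symm (hc.trans hxyc.symm) (h.edgeCross hgen hconv)
  refine (mem_leftSide_or_mem_leftSide_of_not_separates hx hy hsep').elim
    (fun h ↦ ⟨x, h.1, y, h.2, hxy, hxyc, hcross⟩) fun ⟨hx', hy'⟩ ↦ ?_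
  -- otherwise `xy` lies right of `ab` and cannot cross `uv`, which lies left of it
  have hsep'' := hsep.symm hgen hconv
  rcases det2_pos_or_det2_pos_of_mem_leftSide hgen hab.ne.symm hxy.ne
      (by rwa [Sym2.eq_swap (a := b)]) hx' hy' with h | h
  · exact absurd hsep'' (not_separates_of_mem_leftSide_of_mem_leftSide hgen hconv hu hv h hy')
  · exact absurd (separates_swap_right.2 hsep'')
      (not_separates_of_mem_leftSide_of_mem_leftSide hgen hconv hu hv h hx')

lemma mem_colorDiagonals {e : Sym2 V} :
    e ∈ colorDiagonals G p φ c W ↔ e ∈ W.sym2 ∧ e ∈ diagonals p W ∧ e ∈ G.edgeSet ∧ φ e = c :=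
  Finset.mem_filter

lemma card_le_of_colorDiagonals_eq_empty (hgen : GenPos p) (hconv : ConvexPos p) (hk : 2 ≤ k)
    (hφ : CrossingFree G p φ) (hW : ColorSaturatedOn G p φ c W)
    (hD : colorDiagonals G p φ c W = ∅) : #W ≤ 2 * k - 1 := by
  by_cases hW3 : #W ≤ 3
  · omega
  have hadj (u v : V) (hu : u ∈ W) (hv : v ∈ W) (huv : u ≠ v) : G.Adj u v := by
    by_contra hnadj
    obtain ⟨x, hx, y, hy, hxy, hxyc, hcross⟩ := hW u hu v hv huv hnadj
    have hsep := hcross.separates hgen hxy.ne huv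
      (fun h ↦ hnadj (by rw [← G.mem_edgeSet, h]; exact hxy))
    have : s(x, y) ∈ colorDiagonals G p φ c W := mem_colorDiagonals.2
      ⟨Finset.mk_mem_sym2_iff.2 ⟨hx, hy⟩, mk_mem_diagonals.2 (hsep.isDiagonal hx hy hu hv),
        hxy, hxyc⟩
    simp [hD] at this
  set D := {e ∈ W.sym2 | e ∈ diagonals p W}
  have hDG {e : Sym2 V} (he : e ∈ D) : e ∈ G.edgeSet := by
    induction e using Sym2.ind with
    | h x y =>
      obtain ⟨hx, hy, -⟩ := mk_mem_diagonals.1 (Finset.mem_filter.1 he).2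
      exact hadj x y hx hy (mk_mem_diagonals.1 (Finset.mem_filter.1 he).2).ne
  -- each other color class of diagonals is non-crossing, hence has at most `#W - 3` members
  have hclass : #D ≤ (#W - 3) * #(D.image φ) := by
    refine Finset.card_le_mul_card_image D _ fun c' _ ↦ ?_
    refine Nat.le_sub_of_add_le (card_add_three_le_of_pairwise_not_edgeCross hgen hconv
      (fun e he ↦ ?_) (fun e he f hf hef ↦ ?_) (by omega))
    · exact (Finset.mem_filter.1 (Finset.mem_filter.1 he).1).2
    · simp only [Finset.coe_filter, Set.mem_ofPred_eq] at he hf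
      exact hφ e (hDG he.1) f (hDG hf.1) hef (he.2.trans hf.2.symm)
  have hcolors : #(D.image φ) ≤ k - 1 := by
    calc #(D.image φ) ≤ #(Finset.univ.erase c) := Finset.card_le_card fun c' hc' ↦ by
          obtain ⟨e, he, rfl⟩ := Finset.mem_image.1 hc'
          refine Finset.mem_erase.2 ⟨fun hc ↦ ?_, Finset.mem_univ _⟩
          have : e ∈ colorDiagonals G p φ c W := mem_colorDiagonals.2
            ⟨(Finset.mem_filter.1 he).1, (Finset.mem_filter.1 he).2, hDG he, hc⟩
          simp [hD] at this
      _ = k - 1 := by simp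
  have hpairs : #W * #W ≤ 3 * #W + 2 * #D := card_mul_card_le_card_diagonals hgen W
  have h := hclass.trans (Nat.mul_le_mul_left _ hcolors)
  by_contra! hbig
  zify [show 3 ≤ #W by omega, show 1 ≤ k by omega, show 1 ≤ 2 * k by omega] at hpairs h hbig
  nlinarith [mul_pos (show (0 : ℤ) < #W - 3 by omega) (show (0 : ℤ) < #W - (2 * k - 2) by omega)]

lemma card_colorDiagonals_leftSide_add_lt (hgen : GenPos p) (hab : a ≠ b)
    (ht : s(a, b) ∈ colorDiagonals G p φ c W) :
    #(colorDiagonals G p φ c (leftSide p W a b)) + #(colorDiagonals G p φ c (leftSide p W b a))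
      < #(colorDiagonals G p φ c W) := by
  have hsub (x y : V) (hxy : s(x, y) = s(a, b)) :
      colorDiagonals G p φ c (leftSide p W x y) ⊆ (colorDiagonals G p φ c W).erase s(a, b) := by
    intro e he
    obtain ⟨he₁, he₂, he₃⟩ := mem_colorDiagonals.1 he
    refine Finset.mem_erase.2 ⟨?_, mem_colorDiagonals.2 ⟨Finset.sym2_mono leftSide_subset he₁,
      diagonals_mono leftSide_subset he₂, he₃⟩⟩
    rintro rfl
    exact not_isDiagonal_leftSide (mk_mem_diagonals.1 (hxy ▸ he₂))
  have hdisj : Disjoint (colorDiagonals G p φ c (leftSide p W a b))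
      (colorDiagonals G p φ c (leftSide p W b a)) :=
    Finset.disjoint_left.2 fun e h₁ h₂ ↦ Set.disjoint_left.1 (disjoint_diagonals_leftSide hgen hab)
      (mem_colorDiagonals.1 h₁).2.1 (mem_colorDiagonals.1 h₂).2.1
  rw [← Finset.card_union_of_disjoint hdisj]
  exact (Finset.card_le_card (Finset.union_subset (hsub a b rfl) (hsub b a Sym2.eq_swap))).trans_lt
    (Finset.card_erase_lt_of_mem ht)

theorem card_le_of_colorSaturatedOn (hgen : GenPos p) (hconv : ConvexPos p) (hk : 2 ≤ k)
    (hφ : CrossingFree G p φ) (hW : ColorSaturatedOn G p φ c W) :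
    (#W : ℤ) ≤ (2 * k - 3) * #(colorDiagonals G p φ c W) + 2 * k - 1 := by
  induction W using Finset.strongInduction with
  | H W ih =>
  rcases (colorDiagonals G p φ c W).eq_empty_or_nonempty with hD | hD
  · have := card_le_of_colorDiagonals_eq_empty hgen hconv hk hφ hW hD
    rw [hD, Finset.card_empty]
    omega
  obtain ⟨a, b, ht⟩ := Sym2.exists.1 hD
  obtain ⟨-, hab, hadj, hc⟩ := mem_colorDiagonals.1 ht
  rw [mk_mem_diagonals] at hab
  have h₁ := ih _ hab.leftSide_ssubset (hW.leftSide hgen hconv hφ hab hadj hc)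
  have h₂ := ih _ hab.symm.leftSide_ssubset
    (hW.leftSide hgen hconv hφ hab.symm hadj.symm (by rwa [Sym2.eq_swap]))
  have hsum := card_leftSide_add_card_leftSide hgen hab.1 hab.2.1 hab.ne
  have hlt := card_colorDiagonals_leftSide_add_lt hgen hab.ne ht
  have hk' : (0 : ℤ) ≤ 2 * k - 3 := by omega
  zify at hsum hlt
  nlinarith

end Coloring

theorem stmt8_general (n k : ℕ) (hk : 2 ≤ k)
    (G : SimpleGraph (Fin n)) (p : Fin n → Pt) (φ : Sym2 (Fin n) → Fin k)
    (hgen : GenPos p) (hconv : ConvexPos p)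
    (hφ : CrossingFree G p φ) (hsat : PrecoloredSaturated G p φ) :
    ∀ c : Fin k,
      (2 * (k : ℤ) - 3) * (({e : Sym2 (Fin n) | e ∈ G.edgeSet ∧ φ e = c ∧
          ¬ IsOuterEdge p e}.ncard : ℤ)) ≥ (n : ℤ) - 2 * k + 1 := by
  intro c
  have hcard := card_le_of_colorSaturatedOn hgen hconv hk hφ (colorSaturatedOn_univ hφ hsat c)
  rw [Finset.card_univ, Fintype.card_fin] at hcard
  have hsub : ↑(colorDiagonals G p φ c Finset.univ) ⊆
      {e : Sym2 (Fin n) | e ∈ G.edgeSet ∧ φ e = c ∧ ¬ IsOuterEdge p e} := fun e he ↦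
    have ⟨_, hdiag, hG, hc⟩ := mem_colorDiagonals.1 he
    ⟨hG, hc, not_isOuterEdge_of_mem_diagonals hdiag⟩
  have hle := Set.ncard_le_ncard hsub
  rw [Set.ncard_coe_finset] at hle
  have := mul_le_mul_of_nonneg_left (Int.ofNat_le.2 hle) (show (0 : ℤ) ≤ 2 * k - 3 by omega)
  linarith

/-- In a saturated precolored convex Θ^k-drawing (`k ≥ 2`) on
`n ≥ 2k-1` vertices, each color class contains at least `(n-2k+1)/(2k-3)`
inner edges. -/
theorem stmt8 (n k : ℕ) (hk : 2 ≤ k) (hn : 2 * k - 1 ≤ n)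
    (G : SimpleGraph (Fin n)) (p : Fin n → Pt) (φ : Sym2 (Fin n) → Fin k)
    (hgen : GenPos p) (hconv : ConvexPos p)
    (hφ : CrossingFree G p φ) (hsat : PrecoloredSaturated G p φ) :
    ∀ c : Fin k,
      (2 * (k : ℤ) - 3) * (({e : Sym2 (Fin n) | e ∈ G.edgeSet ∧ φ e = c ∧
          ¬ IsOuterEdge p e}.ncard : ℤ)) ≥ (n : ℤ) - 2 * k + 1 :=
  stmt8_general n k hk G p φ hgen hconv hφ hsat
end

section
/- Let p₀, p₁, p₂, p₃, p₄ ∈ ℝ² be five points in convex position, labeled in cyclic order along the boundary of their convex hull, with no three of them collinear. For i ∈ {0,…,4}, let dᵢ denote the segment from pᵢ to p_{i+2 mod 5}. Then for every 2-coloring c : {0,…,4} → {1,2} of these five diagonals, there exist indices i ≠ j with c(i) = c(j) such that dᵢ and dⱼ cross (some point lies in the open segment of both dᵢ and dⱼ). -/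
open scoped Classical

lemma ratio_mem_Ioo {x y : ℝ} (h : x * y < 0) : x / (x - y) ∈ Set.Ioo (0:ℝ) 1 := by
  rcases mul_neg_iff.mp h with ⟨hx, hy⟩ | ⟨hx, hy⟩
  · refine ⟨div_pos hx (by linarith), ?_⟩
    rw [div_lt_one (by linarith)]; linarith
  · refine ⟨div_pos_of_neg_of_neg hx (by linarith), ?_⟩
    rw [div_lt_one_iff]
    exact Or.inr (Or.inr ⟨by linarith, by linarith⟩)

lemma cross_of_det (a b c d : Pt)
    (h1 : det2 a c b * det2 a c d < 0)
    (h2 : det2 b d a * det2 b d c < 0) :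
    SegCross a c b d := by
  have hd1 : det2 a c b - det2 a c d ≠ 0 := by
    intro h; rw [sub_eq_zero] at h; rw [h] at h1; nlinarith [sq_nonneg (det2 a c d)]
  have hd2 : det2 b d a - det2 b d c ≠ 0 := by
    intro h; rw [sub_eq_zero] at h; rw [h] at h2; nlinarith [sq_nonneg (det2 b d c)]
  set t := det2 b d a / (det2 b d a - det2 b d c) with ht
  set s := det2 a c b / (det2 a c b - det2 a c d) with hs
  refine ⟨(1 - t) • a + t • c, ?_, ?_⟩
  · rw [openSegment_eq_image]
    exact ⟨t, ratio_mem_Ioo h2, rfl⟩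
  · rw [openSegment_eq_image]
    refine ⟨s, ratio_mem_Ioo h1, ?_⟩
    rw [ht, hs] at *
    apply Prod.ext <;>
    · simp only [Prod.fst_add, Prod.snd_add, Prod.smul_fst, Prod.smul_snd, smul_eq_mul]
      simp only [det2] at hd1 hd2 ⊢
      field_simp
      ring

set_option maxHeartbeats 1000000 in
/-- For five points in convex position labeled in cyclic order
(no three collinear), every 2-coloring of the five diagonals `pᵢ p_{i+2 mod 5}`
has two distinct equally colored diagonals that cross. -/
theorem stmt12 (p : ℕ → Pt)
    (hcyc : (∀ i j l : ℕ, i < j → j < l → l < 5 →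
              0 < det2 (p i) (p j) (p l)) ∨
            (∀ i j l : ℕ, i < j → j < l → l < 5 →
              det2 (p i) (p j) (p l) < 0))
    (c : ℕ → Fin 2) :
    ∃ i j : ℕ, i < 5 ∧ j < 5 ∧ i ≠ j ∧ c i = c j ∧
      SegCross (p i) (p ((i + 2) % 5)) (p j) (p ((j + 2) % 5)) := by
  have key :
      (0 < det2 (p 0) (p 1) (p 2) * det2 (p 0) (p 2) (p 3)) ∧
      (0 < det2 (p 0) (p 1) (p 3) * det2 (p 1) (p 2) (p 3)) ∧
      (0 < det2 (p 1) (p 2) (p 3) * det2 (p 1) (p 3) (p 4)) ∧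
      (0 < det2 (p 1) (p 2) (p 4) * det2 (p 2) (p 3) (p 4)) ∧
      (0 < det2 (p 2) (p 3) (p 4) * det2 (p 0) (p 2) (p 4)) ∧
      (0 < det2 (p 0) (p 2) (p 3) * det2 (p 0) (p 3) (p 4)) ∧
      (0 < det2 (p 0) (p 3) (p 4) * det2 (p 0) (p 1) (p 3)) ∧
      (0 < det2 (p 1) (p 3) (p 4) * det2 (p 0) (p 1) (p 4)) ∧
      (0 < det2 (p 0) (p 1) (p 4) * det2 (p 1) (p 2) (p 4)) ∧
      (0 < det2 (p 0) (p 2) (p 4) * det2 (p 0) (p 1) (p 2)) := by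
    rcases hcyc with h | h
    · exact ⟨mul_pos (h 0 1 2 (by norm_num) (by norm_num) (by norm_num)) (h 0 2 3 (by norm_num) (by norm_num) (by norm_num)),
        mul_pos (h 0 1 3 (by norm_num) (by norm_num) (by norm_num)) (h 1 2 3 (by norm_num) (by norm_num) (by norm_num)),
        mul_pos (h 1 2 3 (by norm_num) (by norm_num) (by norm_num)) (h 1 3 4 (by norm_num) (by norm_num) (by norm_num)),
        mul_pos (h 1 2 4 (by norm_num) (by norm_num) (by norm_num)) (h 2 3 4 (by norm_num) (by norm_num) (by norm_num)),
        mul_pos (h 2 3 4 (by norm_num) (by norm_num) (by norm_num)) (h 0 2 4 (by norm_num) (by norm_num) (by norm_num)),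
        mul_pos (h 0 2 3 (by norm_num) (by norm_num) (by norm_num)) (h 0 3 4 (by norm_num) (by norm_num) (by norm_num)),
        mul_pos (h 0 3 4 (by norm_num) (by norm_num) (by norm_num)) (h 0 1 3 (by norm_num) (by norm_num) (by norm_num)),
        mul_pos (h 1 3 4 (by norm_num) (by norm_num) (by norm_num)) (h 0 1 4 (by norm_num) (by norm_num) (by norm_num)),
        mul_pos (h 0 1 4 (by norm_num) (by norm_num) (by norm_num)) (h 1 2 4 (by norm_num) (by norm_num) (by norm_num)),
        mul_pos (h 0 2 4 (by norm_num) (by norm_num) (by norm_num)) (h 0 1 2 (by norm_num) (by norm_num) (by norm_num))⟩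
    · exact ⟨mul_pos_of_neg_of_neg (h 0 1 2 (by norm_num) (by norm_num) (by norm_num)) (h 0 2 3 (by norm_num) (by norm_num) (by norm_num)),
        mul_pos_of_neg_of_neg (h 0 1 3 (by norm_num) (by norm_num) (by norm_num)) (h 1 2 3 (by norm_num) (by norm_num) (by norm_num)),
        mul_pos_of_neg_of_neg (h 1 2 3 (by norm_num) (by norm_num) (by norm_num)) (h 1 3 4 (by norm_num) (by norm_num) (by norm_num)),
        mul_pos_of_neg_of_neg (h 1 2 4 (by norm_num) (by norm_num) (by norm_num)) (h 2 3 4 (by norm_num) (by norm_num) (by norm_num)),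
        mul_pos_of_neg_of_neg (h 2 3 4 (by norm_num) (by norm_num) (by norm_num)) (h 0 2 4 (by norm_num) (by norm_num) (by norm_num)),
        mul_pos_of_neg_of_neg (h 0 2 3 (by norm_num) (by norm_num) (by norm_num)) (h 0 3 4 (by norm_num) (by norm_num) (by norm_num)),
        mul_pos_of_neg_of_neg (h 0 3 4 (by norm_num) (by norm_num) (by norm_num)) (h 0 1 3 (by norm_num) (by norm_num) (by norm_num)),
        mul_pos_of_neg_of_neg (h 1 3 4 (by norm_num) (by norm_num) (by norm_num)) (h 0 1 4 (by norm_num) (by norm_num) (by norm_num)),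
        mul_pos_of_neg_of_neg (h 0 1 4 (by norm_num) (by norm_num) (by norm_num)) (h 1 2 4 (by norm_num) (by norm_num) (by norm_num)),
        mul_pos_of_neg_of_neg (h 0 2 4 (by norm_num) (by norm_num) (by norm_num)) (h 0 1 2 (by norm_num) (by norm_num) (by norm_num))⟩
  obtain ⟨k1, k2, k3, k4, k5, k6, k7, k8, k9, k10⟩ := key
  have C0 : SegCross (p 0) (p 2) (p 1) (p 3) := by
    apply cross_of_det
    · simp only [det2] at k1 ⊢; linarith [k1]
    · simp only [det2] at k2 ⊢; linarith [k2]
  have C1 : SegCross (p 1) (p 3) (p 2) (p 4) := by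
    apply cross_of_det
    · simp only [det2] at k3 ⊢; linarith [k3]
    · simp only [det2] at k4 ⊢; linarith [k4]
  have C2 : SegCross (p 2) (p 4) (p 3) (p 0) := by
    apply cross_of_det
    · simp only [det2] at k5 ⊢; linarith [k5]
    · simp only [det2] at k6 ⊢; linarith [k6]
  have C3 : SegCross (p 3) (p 0) (p 4) (p 1) := by
    apply cross_of_det
    · simp only [det2] at k7 ⊢; linarith [k7]
    · simp only [det2] at k8 ⊢; linarith [k8]
  have C4 : SegCross (p 4) (p 1) (p 0) (p 2) := by
    apply cross_of_det
    · simp only [det2] at k9 ⊢; linarith [k9]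
    · simp only [det2] at k10 ⊢; linarith [k10]
  have hpair : c 0 = c 1 ∨ c 1 = c 2 ∨ c 2 = c 3 ∨ c 3 = c 4 ∨ c 4 = c 0 := by
    have hv : ∀ i : ℕ, (c i).val < 2 := fun i => (c i).isLt
    by_contra hcon
    push_neg at hcon
    obtain ⟨h1, h2, h3, h4, h5⟩ := hcon
    have g1 := Fin.val_ne_of_ne h1
    have g2 := Fin.val_ne_of_ne h2
    have g3 := Fin.val_ne_of_ne h3
    have g4 := Fin.val_ne_of_ne h4
    have g5 := Fin.val_ne_of_ne h5
    have := hv 0; have := hv 1; have := hv 2; have := hv 3; have := hv 4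
    omega
  rcases hpair with h | h | h | h | h
  · exact ⟨0, 1, by norm_num, by norm_num, by norm_num, h, C0⟩
  · exact ⟨1, 2, by norm_num, by norm_num, by norm_num, h, C1⟩
  · exact ⟨2, 3, by norm_num, by norm_num, by norm_num, h, C2⟩
  · exact ⟨3, 4, by norm_num, by norm_num, by norm_num, h, C3⟩
  · exact ⟨4, 0, by norm_num, by norm_num, by norm_num, h, C4⟩
end
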